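/- Let u be a nonconstant inner function and let φ ∈ L∞(𝕋) be such that the dual truncated Toeplitz operator D_φ on K_u^⊥ is a normal operator. Then dist(0, convexHull(ess ran(φ))) ≤ m(D_φ) ≤ ess inf_{ζ ∈ 𝕋} |φ(ζ)|. -/

import Mathlib

open MeasureTheory Complex
open scoped InnerProductSpace ENNReal

noncomputable section

namespace DTTO

instance fact2pi : Fact (0 < 2 * Real.pi) := ⟨by positivity⟩

/-- The circle, realized as `ℝ / 2πℤ`. -/
abbrev 𝕋c := AddCircle (2 * Real.pi)

/-- Normalized Haar (Lebesgue) measure on the circle. -/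
abbrev μT : Measure 𝕋c := AddCircle.haarAddCircle

/-- `L²(𝕋)`. -/
abbrev L2 := Lp ℂ 2 μT

/-- `L∞(𝕋)`. -/
abbrev Linf := Lp ℂ ⊤ μT

lemma memL2_smul (φ : Linf) (f : L2) : MemLp (⇑φ • ⇑f) 2 μT :=
  (Lp.memLp f).smul (Lp.memLp φ)

/-- Multiplication operator `M_φ : L² → L²` by a function `φ ∈ L∞`. -/
def Mmul (φ : Linf) : L2 →L[ℂ] L2 :=
  LinearMap.mkContinuous
    { toFun := fun f => (memL2_smul φ f).toLp _
      map_add' := fun f g => by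
        refine Lp.ext ?_
        filter_upwards [MemLp.coeFn_toLp (memL2_smul φ (f + g)),
          MemLp.coeFn_toLp (memL2_smul φ f), MemLp.coeFn_toLp (memL2_smul φ g),
          Lp.coeFn_add f g,
          Lp.coeFn_add ((memL2_smul φ f).toLp _) ((memL2_smul φ g).toLp _)] with
            x h1 h2 h3 h4 h5
        rw [h1, h5]
        simp only [Pi.add_apply, h2, h3]
        simp only [Pi.smul_apply', h4, Pi.add_apply, smul_add]
      map_smul' := fun c f => by
        refine Lp.ext ?_
        filter_upwards [MemLp.coeFn_toLp (memL2_smul φ (c • f)),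
          MemLp.coeFn_toLp (memL2_smul φ f),
          Lp.coeFn_smul c f,
          Lp.coeFn_smul c ((memL2_smul φ f).toLp _)] with x h1 h2 h3 h4
        rw [h1, RingHom.id_apply, h4]
        simp only [Pi.smul_apply, Pi.smul_apply', h2, h3]
        exact smul_comm _ _ _ }
    ‖φ‖ (fun f => by
      simp only [LinearMap.coe_mk, AddHom.coe_mk]
      rw [Lp.norm_toLp, Lp.norm_def, Lp.norm_def]
      rw [← ENNReal.toReal_mul]
      refine ENNReal.toReal_mono ?_ ?_
      · exact ENNReal.mul_ne_top (Lp.eLpNorm_ne_top φ) (Lp.eLpNorm_ne_top f)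
      · exact eLpNorm_smul_le_eLpNorm_top_mul_eLpNorm 2 (Lp.aestronglyMeasurable f) ⇑φ)

/-- The canonical inclusion `L∞ ⊆ L²` (the measure is finite). -/
def toL2 (φ : Linf) : L2 := ((Lp.memLp φ).mono_exponent le_top).toLp _

/-- The Hardy space `H²`, the closed linear span in `L²` of the exponentials `e_n`, `n ≥ 0`. -/
def H2 : Submodule ℂ L2 :=
  (Submodule.span ℂ (Set.range fun n : ℕ => (fourierLp 2 (n : ℤ) : L2))).topologicalClosure

instance : CompleteSpace H2 := (Submodule.isClosed_topologicalClosure _).completeSpace_coe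

/-- `H²₋ = L² ⊖ H²`. -/
def Hminus : Submodule ℂ L2 := H2ᗮ

instance : CompleteSpace Hminus := (Submodule.isClosed_orthogonal _).completeSpace_coe

/-- `H∞ = H² ∩ L∞`. -/
def MemHinf (φ : Linf) : Prop := toL2 φ ∈ H2

/-- An inner function: an element of `H² ∩ L∞` of modulus one a.e. -/
structure IsInnerFn (u : Linf) : Prop where
  memH2 : MemHinf u
  unimod : ∀ᵐ z ∂μT, ‖u z‖ = 1

/-- `u` is nonconstant (not a.e. equal to a constant). -/
def Nonconst (u : Linf) : Prop := ¬ ∃ c : ℂ, (⇑u : 𝕋c → ℂ) =ᵐ[μT] fun _ => c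

/-- The subspace `uH²` of `L²`. -/
def uH2 (u : Linf) : Submodule ℂ L2 := H2.map (Mmul u).toLinearMap

/-- The model space `K_u = H² ⊖ uH² = H² ∩ (uH²)ᗮ`. -/
def Ku (u : Linf) : Submodule ℂ L2 := H2 ⊓ (uH2 u)ᗮ

lemma isClosed_Ku (u : Linf) : IsClosed ((Ku u : Set L2)) := by
  have h : (Ku u : Set L2) = (H2 : Set L2) ∩ ((uH2 u)ᗮ : Set L2) := rfl
  rw [h]
  exact (Submodule.isClosed_topologicalClosure _).inter (Submodule.isClosed_orthogonal _)

instance (u : Linf) : CompleteSpace (Ku u) := (isClosed_Ku u).completeSpace_coe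

/-- `K_u^⊥ = L² ⊖ K_u`. -/
def KuP (u : Linf) : Submodule ℂ L2 := (Ku u)ᗮ

instance (u : Linf) : CompleteSpace (KuP u) := (Submodule.isClosed_orthogonal _).completeSpace_coe

/-- Dual truncated Toeplitz operator `D_φ` on `K_u^⊥`. -/
def Dop (u φ : Linf) : KuP u →L[ℂ] KuP u :=
  Submodule.orthogonalProjectionOnto (KuP u) ∘L Mmul φ ∘L (KuP u).subtypeL

/-- Truncated Toeplitz operator `A_φ` on `K_u`. -/
def Aop (u φ : Linf) : Ku u →L[ℂ] Ku u :=
  Submodule.orthogonalProjectionOnto (Ku u) ∘L Mmul φ ∘L (Ku u).subtypeL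

/-- The operator `B_φ : K_u → K_u^⊥`, `B_φ f = (I - P_{K_u})(φ f)`. -/
def Bop (u φ : Linf) : Ku u →L[ℂ] KuP u :=
  Submodule.orthogonalProjectionOnto (KuP u) ∘L Mmul φ ∘L (Ku u).subtypeL

/-- Toeplitz operator `T_φ : H² → H²`. -/
def Top (φ : Linf) : H2 →L[ℂ] H2 :=
  Submodule.orthogonalProjectionOnto H2 ∘L Mmul φ ∘L H2.subtypeL

/-- Hankel operator `H_φ : H² → H²₋`. -/
def Hop (φ : Linf) : H2 →L[ℂ] Hminus :=
  Submodule.orthogonalProjectionOnto Hminus ∘L Mmul φ ∘L H2.subtypeL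

/-- The exponential `e₁(ζ) = ζ` as an element of `L∞`. -/
def e1 : Linf := fourierLp ⊤ 1

/-- The exponential `e₋₁(ζ) = ζ̄` as an element of `L∞`. -/
def eneg1 : Linf := fourierLp ⊤ (-1)

/-- The operator `Q : H²₋ → H²₋`, `Q g = P₋(e₁ g)`. -/
def Qop : Hminus →L[ℂ] Hminus :=
  Submodule.orthogonalProjectionOnto Hminus ∘L Mmul e1 ∘L Hminus.subtypeL

/-- `u(0)`, the 0-th Fourier coefficient. -/
def coef0 (u : Linf) : ℂ := fourierCoeff (⇑u) 0

/-- Minimum modulus of a bounded operator. -/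
def minMod {E F : Type*} [NormedAddCommGroup E] [NormedSpace ℂ E]
    [NormedAddCommGroup F] [NormedSpace ℂ F] (T : E →L[ℂ] F) : ℝ :=
  ⨅ x : {x : E // ‖x‖ = 1}, ‖T x.1‖

/-- Complex conjugation on `L∞`. -/
lemma memLinf_star (φ : Linf) : MemLp (fun z => (starRingEnd ℂ) (φ z)) ⊤ μT := by
  refine ⟨continuous_star.comp_aestronglyMeasurable (Lp.aestronglyMeasurable φ), ?_⟩
  rw [eLpNorm_congr_norm_ae (g := ⇑φ) (Filter.Eventually.of_forall fun z => norm_star _)]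
  exact Lp.eLpNorm_lt_top φ

/-- The complex conjugate `φ̄ ∈ L∞` of `φ ∈ L∞`. -/
def conjL (φ : Linf) : Linf := (memLinf_star φ).toLp _

lemma memLinf_mul (φ ψ : Linf) : MemLp (⇑φ • ⇑ψ) ⊤ μT :=
  (Lp.memLp ψ).smul (Lp.memLp φ)

/-- The pointwise product of two elements of `L∞`. -/
def mulL (φ ψ : Linf) : Linf := (memLinf_mul φ ψ).toLp _

end DTTO

namespace DTTO

lemma inner_fourierLp_eq_zero {m n : ℤ} (h : m ≠ n) :
    (inner ℂ (fourierLp 2 m : L2) (fourierLp 2 n : L2) : ℂ) = 0 := by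
  have hcoe := congrFun (coe_fourierBasis (T := 2 * Real.pi))
  have h2 := (fourierBasis (T := 2 * Real.pi)).orthonormal.2 (i := m) (j := n) h
  simpa only [hcoe] using h2

lemma span_le_orth_em1 :
    Submodule.span ℂ (Set.range fun n : ℕ => (fourierLp 2 (n : ℤ) : L2))
      ≤ (ℂ ∙ (fourierLp 2 (-1) : L2))ᗮ := by
  rw [Submodule.span_le]
  rintro x ⟨n, rfl⟩
  rw [SetLike.mem_coe, Submodule.mem_orthogonal]
  intro w hw
  obtain ⟨c, rfl⟩ := Submodule.mem_span_singleton.1 hw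
  rw [inner_smul_left, inner_fourierLp_eq_zero (by omega : (-1 : ℤ) ≠ (n : ℤ)), mul_zero]

lemma H2_le_orth_em1 : H2 ≤ (ℂ ∙ (fourierLp 2 (-1) : L2))ᗮ :=
  Submodule.topologicalClosure_minimal _ span_le_orth_em1 (Submodule.isClosed_orthogonal _)

/-- `e₋₁ ∈ H²₋`. -/
lemma em1_mem : (fourierLp 2 (-1) : L2) ∈ Hminus := by
  unfold Hminus
  rw [Submodule.mem_orthogonal]
  intro v hv
  have h := H2_le_orth_em1 hv
  rw [Submodule.mem_orthogonal] at h
  exact inner_eq_zero_symm.mp (h _ (Submodule.mem_span_singleton_self _))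

/-- `e₋₁` as an element of `H²₋`. -/
def em1 : Hminus := ⟨(fourierLp 2 (-1) : L2), em1_mem⟩

/-- For `f ∈ K_u`, the function `u f ∈ uH² ⊆ K_u^⊥`. -/
lemma mul_mem_KuP (u : Linf) (f : Ku u) : Mmul u (f : L2) ∈ KuP u := by
  unfold KuP
  rw [Submodule.mem_orthogonal]
  intro v hv
  have hv2 : v ∈ (uH2 u)ᗮ := (Submodule.mem_inf.1 hv).2
  have hm : Mmul u (f : L2) ∈ uH2 u :=
    Submodule.mem_map_of_mem (Submodule.mem_inf.1 f.2).1
  rw [Submodule.mem_orthogonal] at hv2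
  exact inner_eq_zero_symm.mp (hv2 _ hm)

lemma Ku_le_H2 (u : Linf) : Ku u ≤ H2 := inf_le_left

/-- The inclusion `K_u ⊆ H²` as a continuous linear map. -/
def KuIncl (u : Linf) : Ku u →L[ℂ] H2 :=
  LinearMap.mkContinuous (Submodule.inclusion (Ku_le_H2 u)) 1
    (fun f => by rw [one_mul]; exact le_of_eq rfl)

end DTTO

namespace DTTO

/-- The essential range of `φ ∈ L∞`. -/
def essRan (φ : Linf) : Set ℂ :=
  {w : ℂ | ∀ ε > (0 : ℝ), 0 < μT {z : 𝕋c | ‖φ z - w‖ < ε}}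

/-- The essential infimum of `|φ|`. -/
def essInfAbs (φ : Linf) : ℝ := essInf (fun z => ‖φ z‖) μT

/-!
For a unit vector `x ∈ K_u^⊥`, `⟪x, D_φ x⟫ = ⟪x, φ x⟫ = ∫ φ |x|² dμ` is the mean of `φ` for the
probability measure `|x|² dμ`, so it lies in the closed convex hull of the essential range of `φ`,
while `|⟪x, D_φ x⟫| ≤ ‖D_φ x‖`.

For the upper bound, `uH² ⊆ K_u^⊥` and `|u| = 1` give `m(D_φ) ‖h‖ ≤ ‖φ h‖` for `h ∈ H²`.
Multiplication by `e_n` commutes with `φ` and is isometric, and every trigonometric polynomial is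
moved into `H²` by some `e_n`; by density the bound holds on all of `L²`. Testing it on the
indicator of `{|φ| < c}` shows that this set is null whenever `c < m(D_φ)`.
-/

open scoped NNReal

section MinimumModulus

variable {E F : Type*} [NormedAddCommGroup E] [NormedSpace ℂ E]
  [NormedAddCommGroup F] [NormedSpace ℂ F] (T : E →L[ℂ] F)

lemma bddBelow_range_norm_apply_of_norm_eq_one :
    BddBelow (Set.range fun x : {x : E // ‖x‖ = 1} => ‖T x.1‖) :=
  ⟨0, by rintro _ ⟨x, rfl⟩; exact norm_nonneg _⟩

lemma minMod_mul_norm_le (x : E) : minMod T * ‖x‖ ≤ ‖T x‖ := by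
  rcases eq_or_ne x 0 with rfl | hx
  · simp
  have hx' : 0 < ‖x‖ := norm_pos_iff.2 hx
  have hunit : ‖((‖x‖⁻¹ : ℝ) : ℂ) • x‖ = 1 := by
    rw [norm_smul, Complex.norm_real, norm_inv, norm_norm, inv_mul_cancel₀ hx'.ne']
  have h := ciInf_le (bddBelow_range_norm_apply_of_norm_eq_one T) ⟨_, hunit⟩
  rw [map_smul, norm_smul, Complex.norm_real, norm_inv, norm_norm] at h
  rw [mul_comm]
  exact (le_inv_mul_iff₀ hx').1 h

lemma le_minMod {c : ℝ} (hE : ∃ x : E, ‖x‖ = 1) (h : ∀ x : E, ‖x‖ = 1 → c ≤ ‖T x‖) :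
    c ≤ minMod T :=
  have : Nonempty {x : E // ‖x‖ = 1} := hE.elim fun x hx => ⟨⟨x, hx⟩⟩
  le_ciInf fun x => h x.1 x.2

end MinimumModulus

lemma coeFn_Mmul (φ : Linf) (f : L2) : ⇑(Mmul φ f) =ᵐ[μT] ⇑φ • ⇑f :=
  MemLp.coeFn_toLp (memL2_smul φ f)

lemma ae_norm_le_norm (φ : Linf) : ∀ᵐ z ∂μT, ‖φ z‖ ≤ ‖φ‖ := by
  filter_upwards [enorm_ae_le_eLpNormEssSup (⇑φ) μT] with z hz
  have h1 : ‖φ z‖ = ((‖φ z‖₊ : ℝ≥0∞)).toReal := by simp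
  rw [h1, Lp.norm_def]
  exact ENNReal.toReal_mono (Lp.eLpNorm_ne_top φ) (by rwa [eLpNorm_exponent_top])

lemma Mmul_comm_apply (φ ψ : Linf) (f : L2) : Mmul φ (Mmul ψ f) = Mmul ψ (Mmul φ f) := by
  refine Lp.ext ?_
  filter_upwards [coeFn_Mmul φ (Mmul ψ f), coeFn_Mmul ψ f, coeFn_Mmul ψ (Mmul φ f),
    coeFn_Mmul φ f] with z h1 h2 h3 h4
  simp only [h1, h3, Pi.smul_apply', h2, h4, smul_eq_mul]
  ring

lemma norm_Mmul_of_ae_norm_eq_one {u : Linf} (hu : ∀ᵐ z ∂μT, ‖u z‖ = 1) (f : L2) :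
    ‖Mmul u f‖ = ‖f‖ := by
  have h : ∀ᵐ z ∂μT, ‖Mmul u f z‖ = ‖f z‖ := by
    filter_upwards [hu, coeFn_Mmul u f] with z hz hf
    rw [hf, Pi.smul_apply', smul_eq_mul, norm_mul, hz, one_mul]
  exact le_antisymm (Lp.norm_le_norm_of_ae_le (h.mono fun _ => le_of_eq))
    (Lp.norm_le_norm_of_ae_le (h.mono fun _ => ge_of_eq))

lemma essRan_eq_support_map (φ : Linf) : essRan φ = (μT.map φ).support := by
  ext w
  rw [Metric.nhds_basis_ball.mem_measureSupport]
  refine forall₂_congr fun ε _ => ?_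
  rw [Measure.map_apply_of_aemeasurable (Lp.aestronglyMeasurable φ).aemeasurable
    measurableSet_ball]
  simp only [Metric.ball, Complex.dist_eq, Set.preimage_ofPred_eq]

lemma ae_mem_essRan (φ : Linf) : ∀ᵐ z ∂μT, φ z ∈ essRan φ := by
  rw [essRan_eq_support_map]
  exact ae_of_ae_map (Lp.aestronglyMeasurable φ).aemeasurable Measure.support_mem_ae

lemma le_essInfAbs_of_ae_le {φ : Linf} {c : ℝ} (h : ∀ᵐ z ∂μT, c ≤ ‖φ z‖) :
    c ≤ essInfAbs φ :=
  le_essInf_of_ae_le c h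
    (Filter.IsBoundedUnder.isCoboundedUnder_ge ⟨‖φ‖, Filter.eventually_map.2 (ae_norm_le_norm φ)⟩)

lemma le_essInfAbs_of_mul_norm_le_norm_Mmul {φ : Linf} {c : ℝ}
    (h : ∀ g : L2, c * ‖g‖ ≤ ‖Mmul φ g‖) : c ≤ essInfAbs φ := by
  refine le_of_forall_lt_imp_le_of_dense fun c' hc' => le_essInfAbs_of_ae_le ?_
  rw [ae_iff]
  by_contra hA
  simp only [not_le] at hA
  have hAm : MeasurableSet {z | ‖φ z‖ < c'} :=
    measurableSet_lt (Lp.stronglyMeasurable φ).measurable.norm measurable_const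
  set g : L2 := indicatorConstLp 2 hAm (measure_ne_top _ _) (1 : ℂ)
  have hg : 0 < ‖g‖ := by
    rw [norm_indicatorConstLp two_ne_zero ENNReal.ofNat_ne_top, norm_one, one_mul]
    exact Real.rpow_pos_of_pos (ENNReal.toReal_pos hA (measure_ne_top _ _)) _
  have hφg : ‖Mmul φ g‖ ≤ c' * ‖g‖ := Lp.norm_le_mul_norm_of_ae_le_mul <| by
    filter_upwards [coeFn_Mmul φ g, indicatorConstLp_coeFn (p := 2) (hs := hAm) (c := (1 : ℂ))]
      with z hz hgz
    rw [hz, Pi.smul_apply', smul_eq_mul, norm_mul, hgz]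
    by_cases hzA : z ∈ {z | ‖φ z‖ < c'}
    · exact mul_le_mul_of_nonneg_right (le_of_lt hzA) (norm_nonneg _)
    · simp [Set.indicator_of_notMem hzA]
  exact hc'.not_ge (le_of_mul_le_mul_right ((h g).trans hφg) hg)

lemma fourierLp_mem_H2 {j : ℤ} (hj : 0 ≤ j) : (fourierLp 2 j : L2) ∈ H2 := by
  lift j to ℕ using hj
  exact Submodule.le_topologicalClosure _ (Submodule.subset_span ⟨j, rfl⟩)

lemma Mmul_fourierLp (n k : ℤ) :
    Mmul (fourierLp ⊤ n) (fourierLp 2 k) = (fourierLp 2 (n + k) : L2) := by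
  refine Lp.ext ?_
  filter_upwards [coeFn_Mmul (fourierLp ⊤ n) (fourierLp 2 k), coeFn_fourierLp ⊤ n,
    coeFn_fourierLp 2 k, coeFn_fourierLp 2 (n + k)] with z h1 h2 h3 h4
  rw [h1, h4, Pi.smul_apply', h2, h3, smul_eq_mul, fourier_add]

lemma ae_norm_fourierLp_eq_one (n : ℤ) : ∀ᵐ z ∂μT, ‖(fourierLp ⊤ n : Linf) z‖ = 1 := by
  filter_upwards [coeFn_fourierLp ⊤ n] with z hz
  rw [hz]
  exact Circle.norm_coe _

lemma norm_fourierLp_two (n : ℤ) : ‖(fourierLp 2 n : L2)‖ = 1 := by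
  rw [← coe_fourierBasis]
  exact (fourierBasis (T := 2 * Real.pi)).orthonormal.1 n

lemma exists_Mmul_fourierLp_mem_H2 {p : L2}
    (hp : p ∈ Submodule.span ℂ (Set.range (fourierLp 2 : ℤ → L2))) :
    ∃ n : ℕ, Mmul (fourierLp ⊤ (n : ℤ)) p ∈ H2 := by
  suffices h : ∃ n : ℕ, ∀ m : ℕ, n ≤ m → Mmul (fourierLp ⊤ (m : ℤ)) p ∈ H2 from
    h.imp fun n hn => hn n le_rfl
  induction hp using Submodule.span_induction with
  | mem x hx =>
    obtain ⟨k, rfl⟩ := hx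
    refine ⟨(-k).toNat, fun m hm => ?_⟩
    rw [Mmul_fourierLp]
    exact fourierLp_mem_H2 (by omega)
  | zero => exact ⟨0, fun m _ => by rw [map_zero]; exact H2.zero_mem⟩
  | add x y _ _ hx hy =>
    obtain ⟨n₁, h₁⟩ := hx
    obtain ⟨n₂, h₂⟩ := hy
    refine ⟨max n₁ n₂, fun m hm => ?_⟩
    rw [map_add]
    exact H2.add_mem (h₁ m (le_of_max_le_left hm)) (h₂ m (le_of_max_le_right hm))
  | smul a x _ hx =>
    obtain ⟨n, h⟩ := hx
    exact ⟨n, fun m hm => by rw [map_smul]; exact H2.smul_mem a (h m hm)⟩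

lemma mul_norm_le_norm_Mmul_of_forall_mem_H2 {φ : Linf} {c : ℝ}
    (h : ∀ g ∈ H2, c * ‖g‖ ≤ ‖Mmul φ g‖) (f : L2) : c * ‖f‖ ≤ ‖Mmul φ f‖ := by
  set S : Set L2 := {g | c * ‖g‖ ≤ ‖Mmul φ g‖}
  have hS : IsClosed S :=
    isClosed_le (continuous_const.mul continuous_norm) (Mmul φ).continuous.norm
  have hspan : (Submodule.span ℂ (Set.range (fourierLp 2 : ℤ → L2)) : Set L2) ⊆ S := by
    intro p hp
    obtain ⟨n, hn⟩ := exists_Mmul_fourierLp_mem_H2 hp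
    have he := ae_norm_fourierLp_eq_one n
    calc c * ‖p‖ = c * ‖Mmul (fourierLp ⊤ n) p‖ := by rw [norm_Mmul_of_ae_norm_eq_one he]
      _ ≤ ‖Mmul φ (Mmul (fourierLp ⊤ n) p)‖ := h _ hn
      _ = ‖Mmul φ p‖ := by rw [Mmul_comm_apply, norm_Mmul_of_ae_norm_eq_one he]
  have hf : f ∈ closure (Submodule.span ℂ (Set.range (fourierLp 2 : ℤ → L2)) : Set L2) := by
    rw [← Submodule.topologicalClosure_coe,
      span_fourierLp_closure_eq_top (T := 2 * Real.pi) (p := 2) ENNReal.ofNat_ne_top]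
    trivial
  exact closure_minimal hspan hS hf

lemma uH2_le_KuP (u : Linf) : uH2 u ≤ KuP u := fun _ hw =>
  (Submodule.mem_orthogonal' _ _).2 fun _ hv =>
    inner_eq_zero_symm.1 ((Submodule.mem_orthogonal' _ _).1 hv.2 _ hw)

lemma norm_Dop_apply_le (u φ : Linf) (x : KuP u) : ‖Dop u φ x‖ ≤ ‖Mmul φ x‖ :=
  (KuP u).norm_orthogonalProjectionOnto_apply_le (Mmul φ x)

lemma minMod_Dop_mul_norm_le {u : Linf} (hu : ∀ᵐ z ∂μT, ‖u z‖ = 1) (φ : Linf) {h : L2}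
    (hh : h ∈ H2) : minMod (Dop u φ) * ‖h‖ ≤ ‖Mmul φ h‖ := by
  let x : KuP u := ⟨Mmul u h, uH2_le_KuP u ⟨h, hh, rfl⟩⟩
  calc minMod (Dop u φ) * ‖h‖ = minMod (Dop u φ) * ‖x‖ := by
        rw [Submodule.coe_norm, norm_Mmul_of_ae_norm_eq_one hu]
    _ ≤ ‖Dop u φ x‖ := minMod_mul_norm_le _ x
    _ ≤ ‖Mmul φ (Mmul u h)‖ := norm_Dop_apply_le u φ x
    _ = ‖Mmul φ h‖ := by rw [Mmul_comm_apply, norm_Mmul_of_ae_norm_eq_one hu]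

lemma isProbabilityMeasure_withDensity_nnnorm_sq {α E : Type*} [MeasurableSpace α]
    {μ : Measure α} [NormedAddCommGroup E] (f : Lp E 2 μ) (hf : ‖f‖ = 1) :
    IsProbabilityMeasure (μ.withDensity fun z => ((‖f z‖₊ ^ 2 : ℝ≥0) : ℝ≥0∞)) := by
  constructor
  have h2 : eLpNorm f 2 μ = 1 := by
    rwa [Lp.norm_def, ENNReal.toReal_eq_one_iff] at hf
  have := eLpNorm_nnreal_pow_eq_lintegral (f := f) (μ := μ) (p := 2) two_ne_zero
  rw [withDensity_apply _ MeasurableSet.univ, setLIntegral_univ]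
  simpa [h2, enorm_eq_nnnorm] using this.symm

lemma inner_Mmul_eq_integral (φ : Linf) (f : L2) :
    ⟪f, Mmul φ f⟫_ℂ = ∫ z, φ z ∂(μT.withDensity fun z => ((‖f z‖₊ ^ 2 : ℝ≥0) : ℝ≥0∞)) := by
  have hd : Measurable fun z => (‖f z‖₊ ^ 2 : ℝ≥0) :=
    ((Lp.stronglyMeasurable f).measurable.nnnorm).pow_const 2
  rw [integral_withDensity_eq_integral_smul hd, L2.inner_def]
  refine integral_congr_ae ?_
  filter_upwards [coeFn_Mmul φ f] with z hz
  rw [hz, RCLike.inner_apply', Pi.smul_apply', smul_eq_mul, NNReal.smul_def, Complex.real_smul,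
    NNReal.coe_pow, coe_nnnorm, Complex.ofReal_pow, ← Complex.mul_conj', mul_comm (f z)]
  ring

lemma inner_Mmul_self_mem {φ : Linf} {C : Set ℂ} (hC : Convex ℝ C) (hCc : IsClosed C)
    (hφ : ∀ᵐ z ∂μT, φ z ∈ C) {f : L2} (hf : ‖f‖ = 1) : ⟪f, Mmul φ f⟫_ℂ ∈ C := by
  have := isProbabilityMeasure_withDensity_nnnorm_sq f hf
  have hν : μT.withDensity (fun z => ((‖f z‖₊ ^ 2 : ℝ≥0) : ℝ≥0∞)) ≪ μT :=
    withDensity_absolutelyContinuous _ _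
  rw [inner_Mmul_eq_integral]
  exact hC.integral_mem hCc (hν.ae_le hφ) <| Integrable.mono' (integrable_const ‖φ‖)
    ((Lp.aestronglyMeasurable φ).mono_ac hν) (hν.ae_le (ae_norm_le_norm φ))

lemma infDist_le_minMod_Dop (u φ : Linf) :
    Metric.infDist 0 (convexHull ℝ (essRan φ)) ≤ minMod (Dop u φ) := by
  have hunit : ∃ x : KuP u, ‖x‖ = 1 :=
    ⟨⟨_, Submodule.orthogonal_le (Ku_le_H2 u) em1_mem⟩, norm_fourierLp_two (-1)⟩
  refine le_minMod _ hunit fun x hx => ?_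
  have hmem : ⟪(x : L2), Mmul φ x⟫_ℂ ∈ closure (convexHull ℝ (essRan φ)) :=
    inner_Mmul_self_mem (convex_convexHull ℝ _).closure isClosed_closure
      ((ae_mem_essRan φ).mono fun _ hz => subset_closure (subset_convexHull ℝ _ hz)) hx
  calc Metric.infDist 0 (convexHull ℝ (essRan φ)) ≤ ‖⟪(x : L2), Mmul φ x⟫_ℂ‖ := by
        simpa [Metric.infDist_closure] using Metric.infDist_le_dist_of_mem (x := 0) hmem
    _ = ‖⟪x, Dop u φ x⟫_ℂ‖ :=
        congrArg norm (Submodule.inner_orthogonalProjectionOnto_eq_of_mem_left x _).symm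
    _ ≤ ‖Dop u φ x‖ := by simpa [hx] using norm_inner_le_norm (𝕜 := ℂ) x (Dop u φ x)

theorem minMod_normal_DTTO_bounds_general (u φ : Linf) (hu : IsInnerFn u) :
    Metric.infDist (0 : ℂ) (convexHull ℝ (essRan φ)) ≤ minMod (Dop u φ)
    ∧ minMod (Dop u φ) ≤ essInfAbs φ :=
  ⟨infDist_le_minMod_Dop u φ, le_essInfAbs_of_mul_norm_le_norm_Mmul <|
    mul_norm_le_norm_Mmul_of_forall_mem_H2 fun _ hh => minMod_Dop_mul_norm_le hu.unimod φ hh⟩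

/-- For a normal dual truncated Toeplitz operator `D_φ`:
`dist(0, convexHull(ess ran φ)) ≤ m(D_φ) ≤ ess inf |φ|`. -/
theorem minMod_normal_DTTO_bounds (u φ : Linf) (hu : IsInnerFn u) (hnc : Nonconst u)
    (hnormal : ContinuousLinearMap.adjoint (Dop u φ) ∘L Dop u φ
        = Dop u φ ∘L ContinuousLinearMap.adjoint (Dop u φ)) :
    Metric.infDist (0 : ℂ) (convexHull ℝ (essRan φ)) ≤ minMod (Dop u φ)
    ∧ minMod (Dop u φ) ≤ essInfAbs φ :=
  minMod_normal_DTTO_bounds_general u φ hu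

end DTTO
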